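/- Suppose the nonlinear system x_{k+1} = f(x_k, u_k) admits an exact finite-dimensional Koopman bilinear realization via lifting Ψ with x = C Ψ(x). Given a T-long data trajectory (u^d, x^d) of the nonlinear system, set z^d = Ψ(x^d) and v^d_k = z^d_k ⊗ u^d_k, and assume 𝒢_L(T) = [Z_{1,1,T−L+1}; U_{1,L,T−L+1}; V_{1,L,T−L+1}] has full row rank. Then for every length-L input/state trajectory (u, x) of the nonlinear system there exists g ∈ ℝ^{T−L+1} such that x_{[1,L+1]} = X_{1,L+1,T−L+1} g and u_{[1,L]} = U_{1,L,T−L+1} g, where X is the Hankel matrix of the original (unlifted) state data. -/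
import Mathlib


open Matrix

/-- Kronecker product of two vectors. -/
def kron {n m : ℕ} (z : Fin n → ℝ) (u : Fin m → ℝ) : Fin n × Fin m → ℝ :=
  fun p => z p.1 * u p.2

/-- Depth-`L` Hankel matrix with `C` columns of a `T`-long vector-valued signal. -/
def hankel {α : Type} {T : ℕ} (L C : ℕ) (h : L + C ≤ T + 1) (w : Fin T → α → ℝ) :
    Matrix (Fin L × α) (Fin C) ℝ :=
  fun p j => w ⟨p.1.val + j.val, by have := p.1.isLt; have := j.isLt; omega⟩ p.2

private lemma sum_swap_mulVec {kk ii : Type*} [Fintype kk] [Fintype ii]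
    (c : kk → ℝ) (w : ii → kk → ℝ) (g : ii → ℝ) :
    ∑ b, c b * ∑ j, w j b * g j = ∑ j, (∑ b, c b * w j b) * g j := by
  simp_rw [Finset.mul_sum, Finset.sum_mul, mul_assoc]
  exact Finset.sum_comm

/-- KBR-based Fundamental Lemma for nonlinear systems, direction (i):
under an exact Koopman bilinear realization and persistency of excitation of the
lifted data, every length-`L` input/state trajectory of the nonlinear system is a
linear combination of the columns of the Hankel matrices of the original data. -/
theorem koopman_fundamental_lemma_i {p n m L T : ℕ} (hL : 1 ≤ L) (hLT : L ≤ T)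
    (f : (Fin p → ℝ) → (Fin m → ℝ) → (Fin p → ℝ))
    (Ψ : (Fin p → ℝ) → (Fin n → ℝ))
    (A : Matrix (Fin n) (Fin n) ℝ) (B : Matrix (Fin n) (Fin m) ℝ)
    (H : Matrix (Fin n) (Fin n × Fin m) ℝ) (C : Matrix (Fin p) (Fin n) ℝ)
    (hKBR : ∀ (x : Fin p → ℝ) (u : Fin m → ℝ),
      Ψ (f x u) = A *ᵥ Ψ x + B *ᵥ u + H *ᵥ kron (Ψ x) u)
    (hC : ∀ x : Fin p → ℝ, x = C *ᵥ Ψ x)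
    (ud : Fin T → Fin m → ℝ) (xd : Fin (T + 1) → Fin p → ℝ)
    (hdata : ∀ k : Fin T, xd k.succ = f (xd k.castSucc) (ud k))
    (hrank : Matrix.rank (Matrix.of
        fun (r : Fin n ⊕ ((Fin L × Fin m) ⊕ (Fin L × (Fin n × Fin m))))
            (j : Fin (T - L + 1)) =>
          Sum.elim
            (fun a : Fin n => Ψ (xd ⟨j.val, by have := j.isLt; omega⟩) a)
            (Sum.elim
              (fun q : Fin L × Fin m => hankel L (T - L + 1) (by omega) ud q j)
              (fun q : Fin L × (Fin n × Fin m) =>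
                hankel L (T - L + 1) (by omega)
                  (fun k : Fin T => kron (Ψ (xd k.castSucc)) (ud k)) q j)) r)
      = n + m * L + n * m * L)
    (u : Fin L → Fin m → ℝ) (x : Fin (L + 1) → Fin p → ℝ)
    (htraj : ∀ i : Fin L, x i.succ = f (x i.castSucc) (u i)) :
    ∃ g : Fin (T - L + 1) → ℝ,
      (∀ q : Fin (L + 1) × Fin p,
        x q.1 q.2 = (hankel (L + 1) (T - L + 1) (by omega) xd *ᵥ g) q) ∧
      (∀ q : Fin L × Fin m,
        u q.1 q.2 = (hankel L (T - L + 1) (by omega) ud *ᵥ g) q) := by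
    classical
  set M : Matrix (Fin n ⊕ ((Fin L × Fin m) ⊕ (Fin L × (Fin n × Fin m)))) (Fin (T - L + 1)) ℝ :=
    Matrix.of
        fun (r : Fin n ⊕ ((Fin L × Fin m) ⊕ (Fin L × (Fin n × Fin m))))
            (j : Fin (T - L + 1)) =>
          Sum.elim
            (fun a : Fin n => Ψ (xd ⟨j.val, by have := j.isLt; omega⟩) a)
            (Sum.elim
              (fun q : Fin L × Fin m => hankel L (T - L + 1) (by omega) ud q j)
              (fun q : Fin L × (Fin n × Fin m) =>
                hankel L (T - L + 1) (by omega)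
                  (fun k : Fin T => kron (Ψ (xd k.castSucc)) (ud k)) q j)) r
    with hMdef
  have hrank' : M.rank = n + m * L + n * m * L := hrank
  have hcard : Fintype.card (Fin n ⊕ ((Fin L × Fin m) ⊕ (Fin L × (Fin n × Fin m))))
      = n + m * L + n * m * L := by
    simp [Fintype.card_sum, Fintype.card_prod, Fintype.card_fin]
    ring
  have hrange : LinearMap.range M.mulVecLin = ⊤ := by
    apply Submodule.eq_top_of_finrank_eq
    show M.rank = _
    rw [hrank', Module.finrank_fintype_fun_eq_card, hcard]
  obtain ⟨g, hg⟩ := LinearMap.range_eq_top.mp hrange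
    (Sum.elim (fun a => Ψ (x 0) a)
      (Sum.elim (fun q : Fin L × Fin m => u q.1 q.2)
        (fun q : Fin L × (Fin n × Fin m) => kron (Ψ (x q.1.castSucc)) (u q.1) q.2)))
  rw [Matrix.mulVecLin_apply] at hg
  -- component equations
  have hg0 : ∀ a : Fin n,
      Ψ (x 0) a = ∑ j, Ψ (xd ⟨j.val, by have := j.isLt; omega⟩) a * g j := by
    intro a
    have h := congrFun hg (Sum.inl a)
    simpa [hMdef, Matrix.mulVec, dotProduct] using h.symm
  have hgu : ∀ (i : Fin L) (b : Fin m),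
      u i b = ∑ j, ud ⟨i.val + j.val, by have := i.isLt; have := j.isLt; omega⟩ b * g j := by
    intro i b
    have h := congrFun hg (Sum.inr (Sum.inl (i, b)))
    simpa [hMdef, Matrix.mulVec, dotProduct, hankel] using h.symm
  have hgv : ∀ (i : Fin L) (q : Fin n × Fin m),
      kron (Ψ (x i.castSucc)) (u i) q
        = ∑ j, kron (Ψ (xd (Fin.castSucc
              ⟨i.val + j.val, by have := i.isLt; have := j.isLt; omega⟩)))
            (ud ⟨i.val + j.val, by have := i.isLt; have := j.isLt; omega⟩) q * g j := by
    intro i q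
    have h := congrFun hg (Sum.inr (Sum.inr (i, q)))
    simpa [hMdef, Matrix.mulVec, dotProduct, hankel] using h.symm
  -- main induction on the trajectory
  have key : ∀ (i : ℕ) (hi : i < L + 1) (a : Fin n),
      Ψ (x ⟨i, hi⟩) a
        = ∑ j, Ψ (xd ⟨i + j.val, by have := j.isLt; omega⟩) a * g j := by
    intro i
    induction i with
    | zero =>
      intro hi a
      have h0 : (⟨0, hi⟩ : Fin (L + 1)) = 0 := by
        apply Fin.ext; simp
      rw [h0, hg0 a]
      refine Finset.sum_congr rfl fun j _ => ?_
      congr 1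
      exact congrArg (fun k => Ψ (xd k) a) (Fin.ext (by simp))
    | succ i ih =>
      intro hi a
      have hiL : i < L := by omega
      have hstep := htraj ⟨i, hiL⟩
      rw [Fin.succ_mk, Fin.castSucc_mk] at hstep
      rw [hstep, hKBR]
      have hv := hgv ⟨i, hiL⟩
      rw [Fin.castSucc_mk] at hv
      have hRHS : ∀ j : Fin (T - L + 1),
          Ψ (xd ⟨i + 1 + j.val, by have := j.isLt; omega⟩) a
            = (∑ b, A a b * Ψ (xd (Fin.castSucc
                  ⟨i + j.val, by have := j.isLt; omega⟩)) b)
              + (∑ c, B a c * ud ⟨i + j.val, by have := j.isLt; omega⟩ c)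
              + ∑ q, H a q * kron (Ψ (xd (Fin.castSucc
                  ⟨i + j.val, by have := j.isLt; omega⟩)))
                  (ud ⟨i + j.val, by have := j.isLt; omega⟩) q := by
        intro j
        have hidx : (⟨i + 1 + j.val, by have := j.isLt; omega⟩ : Fin (T + 1))
            = Fin.succ ⟨i + j.val, by have := j.isLt; omega⟩ := by
          apply Fin.ext; simp; omega
        rw [hidx, hdata, hKBR]
        simp [Matrix.mulVec, dotProduct]
      simp only [Pi.add_apply, Matrix.mulVec, dotProduct]
      have hx := ih (by omega)
      simp only [hx, hgu ⟨i, hiL⟩, hv]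
      rw [sum_swap_mulVec (fun b => A a b), sum_swap_mulVec (fun c => B a c),
        sum_swap_mulVec (fun q => H a q)]
      rw [← Finset.sum_add_distrib, ← Finset.sum_add_distrib]
      refine Finset.sum_congr rfl fun j _ => ?_
      rw [hRHS j]
      simp only [Fin.castSucc_mk]
      ring
  have key' : ∀ (i : Fin (L + 1)) (a : Fin n),
      Ψ (x i) a
        = ∑ j, Ψ (xd ⟨i.val + j.val, by have := i.isLt; have := j.isLt; omega⟩) a * g j :=
    fun i a => key i.val i.isLt a
  refine ⟨g, ?_, ?_⟩
  · rintro ⟨i, a⟩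
    have hCx := congrFun (hC (x i)) a
    have hCxd : ∀ j : Fin (T - L + 1),
        (∑ b, C a b * Ψ (xd ⟨i.val + j.val,
            by have := i.isLt; have := j.isLt; omega⟩) b)
          = xd ⟨i.val + j.val, by have := i.isLt; have := j.isLt; omega⟩ a := by
      intro j
      have := congrFun (hC (xd ⟨i.val + j.val,
        by have := i.isLt; have := j.isLt; omega⟩)) a
      simpa [Matrix.mulVec, dotProduct] using this.symm
    simp only [hankel, Matrix.mulVec, dotProduct, Matrix.of_apply]
    rw [hCx]
    simp only [Matrix.mulVec, dotProduct]
    simp only [key']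
    rw [sum_swap_mulVec (fun b => C a b)]
    refine Finset.sum_congr rfl fun j _ => ?_
    rw [hCxd j]
  · rintro ⟨i, b⟩
    simp only [hankel, Matrix.mulVec, dotProduct, Matrix.of_apply]
    exact hgu i b
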